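/- arXiv:2211.13700 — 3 statements merged into one kernel-verified Lean document; each statement's English description precedes it below -/
import Mathlib

section
/- Let N be odd and q a primitive N-th root of unity. In V = ℂ^N with the subspaces V^± spanned by v_i^± := e_i ± e_{−i}, the operator U+U⁻¹ acts by (U+U⁻¹)v_i^± = (q^i + q^{−i})v_i^±, and the operator W+W⁻¹ acts by (W+W⁻¹)v_i^± = v_{i−1}^± + v_{i+1}^±. The restriction of the algebra generated by U+U⁻¹ and W+W⁻¹ to each of V^+ and V^− is irreducible. -/
/-- The operator `U` on `ℂ^N = (ZMod N → ℂ)` defined by `U e_i = q^i • e_i`. -/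
noncomputable def Uop (N : ℕ) (q : ℂ) : (ZMod N → ℂ) →ₗ[ℂ] (ZMod N → ℂ) where
  toFun f := fun i => q ^ i.val * f i
  map_add' _ _ := by funext i; simp [mul_add]
  map_smul' _ _ := by funext i; simp [smul_eq_mul]; ring

/-- The operator `W` on `ℂ^N = (ZMod N → ℂ)` defined by `W e_i = e_{i+1}`. -/
def Wop (N : ℕ) : (ZMod N → ℂ) →ₗ[ℂ] (ZMod N → ℂ) where
  toFun f := fun i => f (i - 1)
  map_add' _ _ := rfl
  map_smul' _ _ := rfl

/-- The operator `W⁻¹` on `ℂ^N`, with `W⁻¹ e_i = e_{i-1}`. -/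
def Winv (N : ℕ) : (ZMod N → ℂ) →ₗ[ℂ] (ZMod N → ℂ) where
  toFun f := fun i => f (i + 1)
  map_add' _ _ := rfl
  map_smul' _ _ := rfl

/-- The involution `θ` on `ℂ^N` with `θ e_i = e_{-i}`. -/
def thetaOp (N : ℕ) : (ZMod N → ℂ) →ₗ[ℂ] (ZMod N → ℂ) where
  toFun f := fun i => f (-i)
  map_add' _ _ := rfl
  map_smul' _ _ := rfl

/-- The vector `v_i^± = e_i ± e_{-i}` (with `s = ±1`). -/
noncomputable def vSym (N : ℕ) (s : ℂ) (i : ZMod N) : ZMod N → ℂ :=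
  (Pi.single i 1 : ZMod N → ℂ) + s • (Pi.single (-i) 1 : ZMod N → ℂ)

/-!
`U + U⁻¹` is diagonal with eigenvalues `q^j + q^{-j}`, and since `q` is primitive these separate
the pairs `{j, -j}`. Hence a `(U + U⁻¹)`-invariant subspace `p ⊆ V^±` containing a vector with
nonzero `j`-th coordinate contains its spectral projection, which is a multiple of `v_j^±`.
Applying `W + W⁻¹` to `v_j^±` and projecting again yields a neighbour `v_{j±1}^±`: for `V^+` all
entries are nonnegative, so nothing cancels; for `V^-` one descends to `v_1^-` (next to
`v_0^- = 0`), which needs `2` to be invertible modulo `N`. Two consecutive `v`'s give all of them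
through the three-term recurrence `(W + W⁻¹) v_k = v_{k-1} + v_{k+1}`, and the `v_j^±` span `V^±`.
-/

lemma pow_zmod_val_add {M : Type*} [Monoid M] {q : M} {N : ℕ} [NeZero N] (hq : q ^ N = 1)
    (a b : ZMod N) : q ^ (a + b).val = q ^ a.val * q ^ b.val := by
  rw [ZMod.val_add, ← pow_add]
  conv_rhs => rw [← Nat.mod_add_div (a.val + b.val) N, pow_add, pow_mul, hq, one_pow, mul_one]

lemma pow_zmod_val_neg {M : Type*} [DivisionMonoid M] {q : M} {N : ℕ} [NeZero N]
    (hq : q ^ N = 1) (a : ZMod N) : q ^ (-a).val = (q ^ a.val)⁻¹ :=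
  eq_inv_of_mul_eq_one_left <| by
    rw [← pow_zmod_val_add hq, neg_add_cancel, ZMod.val_zero, pow_zero]

lemma IsPrimitiveRoot.pow_zmod_val_inj {M : Type*} [CommMonoid M] {q : M} {N : ℕ} [NeZero N]
    (hq : IsPrimitiveRoot q N) {a b : ZMod N} : q ^ a.val = q ^ b.val ↔ a = b := by
  rw [(hq.isOfFinOrder (NeZero.ne N)).pow_inj_mod, ← hq.eq_orderOf,
    ← ZMod.natCast_eq_natCast_iff', ZMod.natCast_zmod_val, ZMod.natCast_zmod_val]

lemma add_inv_eq_add_inv_iff {K : Type*} [Field K] {x y : K} (hx : x ≠ 0) (hy : y ≠ 0) :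
    x + x⁻¹ = y + y⁻¹ ↔ x = y ∨ x * y = 1 := by
  have key : x + x⁻¹ - (y + y⁻¹) = (x - y) * (x * y - 1) / (x * y) := by
    field_simp
    ring
  rw [← sub_eq_zero, key, div_eq_zero_iff, mul_eq_zero, mul_eq_zero, sub_eq_zero, sub_eq_zero]
  simp [hx, hy]

lemma IsPrimitiveRoot.pow_zmod_val_add_inv_eq_iff {N : ℕ} [NeZero N] {q : ℂ}
    (hq : IsPrimitiveRoot q N) {i j : ZMod N} :
    q ^ j.val + (q ^ j.val)⁻¹ = q ^ i.val + (q ^ i.val)⁻¹ ↔ j = i ∨ j = -i := by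
  have hq0 : q ≠ 0 := hq.ne_zero (NeZero.ne N)
  have h1 : (1 : ℂ) = q ^ (0 : ZMod N).val := by rw [ZMod.val_zero, pow_zero]
  rw [add_inv_eq_add_inv_iff (pow_ne_zero _ hq0) (pow_ne_zero _ hq0), hq.pow_zmod_val_inj,
    ← pow_zmod_val_add hq.pow_eq_one, h1, hq.pow_zmod_val_inj, add_eq_zero_iff_eq_neg]

lemma Polynomial.aeval_apply_of_diagonal {ι K : Type*} [Field K] {μ : ι → K}
    {T : Module.End K (ι → K)} (hT : ∀ f j, T f j = μ j * f j) (P : Polynomial K) (f : ι → K)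
    (j : ι) :
    Polynomial.aeval T P f j = P.eval (μ j) * f j := by
  induction P using Polynomial.induction_on generalizing f with
  | C a => simp [Algebra.algebraMap_eq_smul_one]
  | add P Q hP hQ => simp [hP, hQ, add_mul]
  | monomial n a h =>
    rw [pow_succ, ← mul_assoc, map_mul, Module.End.mul_apply, Polynomial.aeval_X, h, hT]
    simp only [Polynomial.eval_mul, Polynomial.eval_pow, Polynomial.eval_C, Polynomial.eval_X]
    ring

/-- Invariant subspaces of a diagonal operator are stable under its spectral projections. -/
lemma ite_eigenvalue_mem_of_diagonal {ι K : Type*} [Fintype ι] [Field K] [DecidableEq K]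
    {μ : ι → K} {T : Module.End K (ι → K)} (hT : ∀ f j, T f j = μ j * f j)
    {p : Submodule K (ι → K)} (hp : p ≤ p.comap T) {v : ι → K} (hv : v ∈ p) (i : ι) :
    (fun j => if μ j = μ i then v j else 0) ∈ p := by
  set P := Lagrange.basis (Finset.univ.image μ) id (μ i)
  have hP : ∀ j, P.eval (μ j) = if μ j = μ i then 1 else 0 := by
    intro j
    have hinj : Set.InjOn id (Finset.univ.image μ : Set K) := Function.injective_id.injOn
    split_ifs with h
    · rw [h]; exact Lagrange.eval_basis_self hinj (by simp)
    · exact Lagrange.eval_basis_of_ne (v := id) (Ne.symm h) (by simp)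
  convert Polynomial.aeval_apply_smul_mem_of_le_comap hv P T hp using 1
  funext j
  rw [Polynomial.aeval_apply_of_diagonal hT, hP]
  split_ifs <;> simp

lemma ZMod.one_of_forall_sub_one {N : ℕ} [NeZero N] {P : ZMod N → Prop}
    (hstep : ∀ j, j ≠ 0 → j ≠ 1 → P j → P (j - 1)) {j : ZMod N} (hj : j ≠ 0) (hPj : P j) :
    P 1 := by
  suffices h : ∀ n : ℕ, n + 1 < N → P ((n + 1 : ℕ) : ZMod N) → P 1 by
    obtain ⟨n, hn⟩ := Nat.exists_eq_add_one_of_ne_zero ((ZMod.val_ne_zero j).mpr hj)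
    exact h n (hn ▸ j.val_lt) (by rw [← hn, ZMod.natCast_zmod_val]; exact hPj)
  intro n
  induction n with
  | zero => simp
  | succ n ih =>
    intro hlt hP
    have hne0 : ((n + 1 + 1 : ℕ) : ZMod N) ≠ 0 := by
      rw [Ne, ZMod.natCast_eq_zero_iff]
      exact fun hdvd => absurd (Nat.le_of_dvd (by omega) hdvd) (by omega)
    have hne1 : ((n + 1 + 1 : ℕ) : ZMod N) ≠ ((1 : ℕ) : ZMod N) := by
      rw [Ne, ZMod.natCast_eq_natCast_iff', Nat.mod_eq_of_lt hlt, Nat.mod_eq_of_lt (by omega)]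
      omega
    refine ih (by omega) ?_
    simpa using hstep _ hne0 (by simpa using hne1) hP

section

variable {N : ℕ} {q s : ℂ} {p : Submodule ℂ (ZMod N → ℂ)}

lemma Uop_add_Uop_inv_apply (f : ZMod N → ℂ) (j : ZMod N) :
    (Uop N q + Uop N q⁻¹) f j = (q ^ j.val + (q ^ j.val)⁻¹) * f j := by
  show q ^ j.val * f j + q⁻¹ ^ j.val * f j = _
  rw [inv_pow]
  ring

lemma vSym_apply (s : ℂ) (i j : ZMod N) :
    vSym N s i j = (if j = i then 1 else 0) + s * (if j = -i then 1 else 0) := by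
  simp [vSym, Pi.single_apply]

lemma Uop_add_Uop_inv_vSym [NeZero N] (hq : q ^ N = 1) (s : ℂ) (i : ZMod N) :
    (Uop N q + Uop N q⁻¹) (vSym N s i) = (q ^ i.val + (q ^ i.val)⁻¹) • vSym N s i := by
  funext j
  rw [Uop_add_Uop_inv_apply, Pi.smul_apply, smul_eq_mul]
  by_cases hji : j = i
  · rw [hji]
  by_cases hji' : j = -i
  · rw [hji', pow_zmod_val_neg hq, inv_inv, add_comm]
  · simp [vSym_apply, hji, hji']

lemma Wop_single (a : ZMod N) (c : ℂ) : Wop N (Pi.single a c) = Pi.single (a + 1) c := by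
  funext j
  show (Pi.single a c : ZMod N → ℂ) (j - 1) = _
  simp only [Pi.single_apply, sub_eq_iff_eq_add]

lemma Winv_single (a : ZMod N) (c : ℂ) : Winv N (Pi.single a c) = Pi.single (a - 1) c := by
  funext j
  show (Pi.single a c : ZMod N → ℂ) (j + 1) = _
  simp only [Pi.single_apply, eq_sub_iff_add_eq]

lemma Wop_add_Winv_vSym (s : ℂ) (i : ZMod N) :
    (Wop N + Winv N) (vSym N s i) = vSym N s (i - 1) + vSym N s (i + 1) := by
  have e1 : -i + 1 = -(i - 1) := by ring
  have e2 : -i - 1 = -(i + 1) := by ring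
  simp only [vSym, LinearMap.add_apply, map_add, map_smul, Wop_single, Winv_single, e1, e2,
    smul_add]
  abel

lemma smul_vSym_eq_of_mem_eigenspace {w : ZMod N → ℂ} {i : ZMod N}
    (hw : w ∈ Module.End.eigenspace (thetaOp N) s) (hsupp : ∀ j, j ≠ i → j ≠ -i → w j = 0) :
    w i • vSym N s i = vSym N s i i • w := by
  have hw_neg : w (-i) = s * w i := congrFun (Module.End.mem_eigenspace_iff.mp hw) i
  funext j
  simp only [Pi.smul_apply, smul_eq_mul]
  by_cases hji : j = i
  · rw [hji, mul_comm]
  by_cases hji' : j = -i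
  · subst hji'
    simp [vSym_apply, hji, Ne.symm hji, hw_neg, mul_comm]
  · simp [vSym_apply, hji, hji', hsupp j hji hji']

lemma vSym_mem_of_apply_ne_zero [NeZero N] (hq : IsPrimitiveRoot q N)
    (hpE : p ≤ Module.End.eigenspace (thetaOp N) s)
    (hU : ∀ v ∈ p, (Uop N q + Uop N q⁻¹) v ∈ p) {v : ZMod N → ℂ} (hv : v ∈ p) {i : ZMod N}
    (hvi : v i ≠ 0) : vSym N s i ∈ p := by
  classical
  set w : ZMod N → ℂ :=
    fun j => if q ^ j.val + (q ^ j.val)⁻¹ = q ^ i.val + (q ^ i.val)⁻¹ then v j else 0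
  have hw : w ∈ p := ite_eigenvalue_mem_of_diagonal Uop_add_Uop_inv_apply hU hv i
  have hsupp : ∀ j, j ≠ i → j ≠ -i → w j = 0 := by
    intro j hji hji'
    simp [w, hq.pow_zmod_val_add_inv_eq_iff, hji, hji']
  have hwi : w i = v i := if_pos rfl
  have hsmul := smul_vSym_eq_of_mem_eigenspace (hpE hw) hsupp
  rw [hwi] at hsmul
  rw [← inv_smul_smul₀ hvi (vSym N s i), hsmul, smul_smul]
  exact p.smul_mem _ hw

lemma vSym_mem_of_add_apply_ne_zero [NeZero N] (hq : IsPrimitiveRoot q N)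
    (hpE : p ≤ Module.End.eigenspace (thetaOp N) s)
    (hU : ∀ v ∈ p, (Uop N q + Uop N q⁻¹) v ∈ p) (hW : ∀ v ∈ p, (Wop N + Winv N) v ∈ p)
    {a b : ZMod N} (ha : vSym N s a ∈ p) (hb : (vSym N s (a - 1) + vSym N s (a + 1)) b ≠ 0) :
    vSym N s b ∈ p :=
  vSym_mem_of_apply_ne_zero hq hpE hU (Wop_add_Winv_vSym s a ▸ hW _ ha) hb

lemma forall_vSym_mem_of_consecutive [NeZero N] (hW : ∀ v ∈ p, (Wop N + Winv N) v ∈ p)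
    {a : ZMod N} (h0 : vSym N s a ∈ p) (h1 : vSym N s (a + 1) ∈ p) (j : ZMod N) :
    vSym N s j ∈ p := by
  have hpair : ∀ k : ℕ, vSym N s (a + k) ∈ p ∧ vSym N s (a + k + 1) ∈ p := by
    intro k
    induction k with
    | zero => simpa using ⟨h0, h1⟩
    | succ k ih =>
      have hB := hW _ ih.2
      rw [Wop_add_Winv_vSym, add_sub_cancel_right] at hB
      push_cast
      exact ⟨by rw [← add_assoc]; exact ih.2,
        by simpa [add_assoc] using p.sub_mem hB ih.1⟩
  simpa using (hpair (j - a).val).1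

lemma sum_smul_vSym [NeZero N] (s : ℂ) (w : ZMod N → ℂ) :
    ∑ j, w j • vSym N s j = w + s • thetaOp N w := by
  have hsingle_neg : ∑ j, w j • (Pi.single (-j) 1 : ZMod N → ℂ) = thetaOp N w := by
    funext k
    simp_rw [Finset.sum_apply, Pi.smul_apply, Pi.single_apply, eq_comm (a := k),
      neg_eq_iff_eq_neg]
    simp [thetaOp]
  have hsingle : ∑ j, w j • (Pi.single j 1 : ZMod N → ℂ) = w := by
    simp_rw [← Pi.single_smul', smul_eq_mul, mul_one]
    exact Finset.univ_sum_single w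
  simp only [vSym, smul_add, Finset.sum_add_distrib, smul_comm (w _) s, ← Finset.smul_sum,
    hsingle_neg, hsingle]

lemma eigenspace_le_of_forall_vSym_mem [NeZero N] (hs : s ^ 2 = 1)
    (h : ∀ j, vSym N s j ∈ p) : Module.End.eigenspace (thetaOp N) s ≤ p := by
  intro w hw
  have hsum : ∑ j, w j • vSym N s j = (2 : ℂ) • w := by
    rw [sum_smul_vSym, Module.End.mem_eigenspace_iff.mp hw, smul_smul, ← sq, hs, two_smul,
      one_smul]
  rw [← inv_smul_smul₀ (two_ne_zero : (2 : ℂ) ≠ 0) w, ← hsum]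
  exact p.smul_mem _ (p.sum_mem fun j _ => p.smul_mem _ (h j))

lemma apply_zero_of_mem_eigenspace_neg_one {v : ZMod N → ℂ}
    (hv : v ∈ Module.End.eigenspace (thetaOp N) (-1)) : v 0 = 0 := by
  have h := congrFun (Module.End.mem_eigenspace_iff.mp hv) 0
  simp only [thetaOp, LinearMap.coe_mk, AddHom.coe_mk, neg_zero, Pi.smul_apply, neg_one_smul] at h
  exact self_eq_neg.mp h

lemma vSym_one_add_vSym_one_apply_ne_zero (a b : ZMod N) : (vSym N 1 b + vSym N 1 a) a ≠ 0 := by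
  simp only [Pi.add_apply, vSym_apply, one_mul]
  split_ifs <;> norm_num

lemma vSym_add_vSym_apply_sub_one (hN : Odd N) (s : ℂ) {j : ZMod N} (hj0 : j ≠ 0) (hj1 : j ≠ 1) :
    (vSym N s (j - 1) + vSym N s (j + 1)) (j - 1) = 1 := by
  have h2 : IsUnit (2 : ZMod N) := by
    simpa using (ZMod.isUnit_iff_coprime 2 N).mpr (Nat.coprime_two_left.mpr hN)
  have c1 : j - 1 ≠ -(j - 1) := fun h =>
    hj1 (sub_eq_zero.mp ((h2.mul_right_eq_zero).mp (by linear_combination h)))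
  have c2 : j - 1 ≠ j + 1 := fun h => hj0 ((h2.mul_right_eq_zero).mp (by linear_combination -j * h))
  have c3 : j - 1 ≠ -(j + 1) := fun h => hj0 ((h2.mul_right_eq_zero).mp (by linear_combination h))
  rw [Pi.add_apply, vSym_apply, vSym_apply, if_pos rfl, if_neg c1, if_neg c2, if_neg c3]
  ring

end

/-- For `N` odd and `q` a primitive `N`-th root of unity, on the eigenspaces
`V^± = {v : θv = ±v}` (spanned by the `v_i^± = e_i ± e_{-i}`) one has
`(U+U⁻¹) v_i^± = (q^i + q^{-i}) v_i^±` and `(W+W⁻¹) v_i^± = v_{i-1}^± + v_{i+1}^±`,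
and the restriction of the algebra generated by `U+U⁻¹` and `W+W⁻¹` to each
eigenspace is irreducible. -/
theorem vSym_action_and_irreducible (N : ℕ) (hN : Odd N)
    (q : ℂ) (hq : IsPrimitiveRoot q N) (s : ℂ) (hs : s = 1 ∨ s = -1) :
    (∀ i : ZMod N,
      (Uop N q + Uop N q⁻¹) (vSym N s i) = (q ^ i.val + (q ^ i.val)⁻¹) • vSym N s i ∧
      (Wop N + Winv N) (vSym N s i) = vSym N s (i - 1) + vSym N s (i + 1)) ∧
    (∀ p : Submodule ℂ (ZMod N → ℂ),
      p ≤ Module.End.eigenspace (thetaOp N) s →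
      (∀ v ∈ p, (Uop N q + Uop N q⁻¹) v ∈ p) →
      (∀ v ∈ p, (Wop N + Winv N) v ∈ p) →
      p = ⊥ ∨ p = Module.End.eigenspace (thetaOp N) s) := by
  have : NeZero N := ⟨hN.pos.ne'⟩
  refine ⟨fun i => ⟨Uop_add_Uop_inv_vSym hq.pow_eq_one s i, Wop_add_Winv_vSym s i⟩,
    fun p hpE hU hW => or_iff_not_imp_left.mpr fun hp => le_antisymm hpE ?_⟩
  refine eigenspace_le_of_forall_vSym_mem (by rcases hs with rfl | rfl <;> norm_num) ?_
  obtain ⟨v, hv, hv0⟩ := p.ne_bot_iff.mp hp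
  obtain ⟨j, hj⟩ := Function.ne_iff.mp hv0
  have hvj : vSym N s j ∈ p := vSym_mem_of_apply_ne_zero hq hpE hU hv hj
  rcases hs with rfl | rfl
  · exact forall_vSym_mem_of_consecutive hW hvj
      (vSym_mem_of_add_apply_ne_zero hq hpE hU hW hvj (vSym_one_add_vSym_one_apply_ne_zero _ _))
  · have hj0 : j ≠ 0 := fun h => hj (h ▸ apply_zero_of_mem_eigenspace_neg_one (hpE hv))
    have h1 : vSym N (-1) 1 ∈ p := ZMod.one_of_forall_sub_one (P := (vSym N (-1) · ∈ p))
      (fun k hk0 hk1 hk => vSym_mem_of_add_apply_ne_zero hq hpE hU hW hk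
        (by rw [vSym_add_vSym_apply_sub_one hN _ hk0 hk1]; exact one_ne_zero)) hj0 hvj
    exact forall_vSym_mem_of_consecutive hW (a := 0) (by simp [vSym]) (by simpa using h1)
end

section
/- Let N be odd, q = A² where A is a primitive N-th root of unity, and define quantum integers {n} := q^n − q^{−n}. Then for integers x, y with 0 ≤ y ≤ x ≤ N−1, the quantum binomial coefficient [x choose y]_q := ({x}·{x−1}···{y+1})/({x−y}!) satisfies [N−1−y choose N−1−x]_q = (−1)^{x−y}·[x choose y]_q. -/
/-! Since `q ^ N = 1`, the quantum integers satisfy `{N - n} = -{n}`. The numerator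
`{N-1-y} ⋯ {x+1}` of the left-hand side is therefore `(-1)^(x-y)` times the product
`{y+1} ⋯ {x}`, which is the numerator of `[x choose y]` read backwards; the two
denominators are both `{x-y}!`. -/

/-- The quantum integer `{n} = q^n - q^{-n}`. -/
noncomputable def qnum (q : ℂ) (n : ℕ) : ℂ := q ^ n - q⁻¹ ^ n

/-- The quantum factorial `{n}! = {n}{n-1}⋯{1}`. -/
noncomputable def qfact (q : ℂ) (n : ℕ) : ℂ := ∏ i ∈ Finset.range n, qnum q (i + 1)

/-- The quantum binomial `[x choose y] = ({x}{x-1}⋯{y+1}) / {x-y}!`. -/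
noncomputable def qbinom (q : ℂ) (x y : ℕ) : ℂ :=
  (∏ i ∈ Finset.range (x - y), qnum q (x - i)) / qfact q (x - y)

open Finset

lemma pow_sub_eq_inv_pow_of_pow_eq_one {q : ℂ} {N n : ℕ} (hq : q ^ N = 1) (hn : n ≤ N) :
    q ^ (N - n) = q⁻¹ ^ n := by
  rw [inv_pow]
  refine eq_inv_of_mul_eq_one_left ?_
  rw [← pow_add, Nat.sub_add_cancel hn, hq]

lemma qnum_sub_of_pow_eq_one {q : ℂ} {N n : ℕ} (hq : q ^ N = 1) (hn : n ≤ N) :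
    qnum q (N - n) = -qnum q n := by
  have hq' : q⁻¹ ^ N = 1 := by rw [inv_pow, hq, inv_one]
  have h₁ := pow_sub_eq_inv_pow_of_pow_eq_one hq hn
  have h₂ := pow_sub_eq_inv_pow_of_pow_eq_one hq' hn
  rw [qnum, qnum, h₁, h₂, inv_inv, neg_sub]

lemma qbinom_eq_prod_range_add (q : ℂ) {x y : ℕ} (hyx : y ≤ x) :
    qbinom q x y = (∏ i ∈ range (x - y), qnum q (y + 1 + i)) / qfact q (x - y) := by
  rw [qbinom, ← prod_range_reflect]
  congr 1
  refine prod_congr rfl fun i hi => ?_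
  rw [mem_range] at hi
  congr 1
  omega

theorem qbinom_sub_sub_of_pow_eq_one {q : ℂ} {N x y : ℕ} (hq : q ^ N = 1) (hyx : y ≤ x)
    (hxN : x ≤ N - 1) :
    qbinom q (N - 1 - y) (N - 1 - x) = (-1 : ℂ) ^ (x - y) * qbinom q x y := by
  have hlen : N - 1 - y - (N - 1 - x) = x - y := by omega
  have hnum : ∀ i ∈ range (x - y), qnum q (N - 1 - y - i) = -qnum q (y + 1 + i) := by
    intro i hi
    rw [mem_range] at hi
    rw [show N - 1 - y - i = N - (y + 1 + i) by omega, qnum_sub_of_pow_eq_one hq (by omega)]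
  rw [qbinom, hlen, prod_congr rfl hnum, prod_neg, card_range, mul_div_assoc,
    qbinom_eq_prod_range_add q hyx]

theorem qbinom_reflection_general (N : ℕ) (A : ℂ) (hA : IsPrimitiveRoot A N)
    (q : ℂ) (hq : q = A ^ 2) (x y : ℕ) (hyx : y ≤ x) (hxN : x ≤ N - 1) :
    qbinom q (N - 1 - y) (N - 1 - x) = (-1 : ℂ) ^ (x - y) * qbinom q x y := by
  have hqN : q ^ N = 1 := by
    rw [hq, ← pow_mul, mul_comm, pow_mul, hA.pow_eq_one, one_pow]
  exact qbinom_sub_sub_of_pow_eq_one hqN hyx hxN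

/-- For `N` odd, `q = A²` with `A` a primitive `N`-th root of unity, and
`0 ≤ y ≤ x ≤ N-1`, one has `[N-1-y choose N-1-x] = (-1)^{x-y} [x choose y]`. -/
theorem qbinom_reflection (N : ℕ) (hN : Odd N) (A : ℂ) (hA : IsPrimitiveRoot A N)
    (q : ℂ) (hq : q = A ^ 2) (x y : ℕ) (hyx : y ≤ x) (hxN : x ≤ N - 1) :
    qbinom q (N - 1 - y) (N - 1 - x) = (-1 : ℂ) ^ (x - y) * qbinom q x y :=
  qbinom_reflection_general N A hA q hq x y hyx hxN
end

section
/- With V_α the N-dimensional module defined above for the unrolled quantum group at a primitive odd N-th root of unity q, if α ∈ ℂ satisfies e^{4iπα/N} ≠ q^{2j} for all j = 1,…,N−1 (e.g. α ∉ (1/2)ℤ), then V_α is a simple module: any nonzero submodule equals V_α. -/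
/-- `q = exp(2iπk/N)`. -/
noncomputable def qval (N k : ℕ) : ℂ :=
  Complex.exp (2 * Real.pi * Complex.I * k / N)

/-- `q^z := exp(2iπkz/N)` for complex exponents `z`. -/
noncomputable def qpow (N k : ℕ) (z : ℂ) : ℂ :=
  Complex.exp (2 * Real.pi * Complex.I * k * z / N)

/-- The quantum integer `[n] = (qⁿ - q⁻ⁿ)/(q - q⁻¹)`. -/
noncomputable def qint (N k : ℕ) (n : ℕ) : ℂ :=
  (qval N k ^ n - (qval N k)⁻¹ ^ n) / (qval N k - (qval N k)⁻¹)

/-- The coefficient of the action of `E` on `V_α`: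
`E v_n = [n]·(q⁻ⁿ e^{2iπα/N} - qⁿ e^{-2iπα/N})/(q - q⁻¹) · v_{n-1}`. -/
noncomputable def Ecoef (N k : ℕ) (α : ℂ) (n : ℕ) : ℂ :=
  qint N k n *
    ((qval N k)⁻¹ ^ n * Complex.exp (2 * Real.pi * Complex.I * α / N) -
      qval N k ^ n * Complex.exp (-(2 * Real.pi * Complex.I * α) / N)) /
    (qval N k - (qval N k)⁻¹)

/-- The action of `H` on `V_α`: `H v_n = (α/k + N - 1 - 2n) v_n`. -/
noncomputable def Hop (N k : ℕ) (α : ℂ) : (Fin N → ℂ) →ₗ[ℂ] (Fin N → ℂ) where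
  toFun f := fun n => (α / k + (N - 1 : ℂ) - 2 * n.val) * f n
  map_add' _ _ := by funext n; simp [mul_add]
  map_smul' _ _ := by funext n; simp [smul_eq_mul]; ring

/-- The action of `F` on `V_α`: `F v_n = v_{n+1}` and `F v_{N-1} = 0`. -/
def Fop (N : ℕ) : (Fin N → ℂ) →ₗ[ℂ] (Fin N → ℂ) where
  toFun f := fun n =>
    if h : 0 < n.val then f ⟨n.val - 1, lt_of_le_of_lt (Nat.sub_le _ _) n.isLt⟩ else 0
  map_add' f g := by
    funext n
    by_cases h : 0 < n.val <;> simp [h]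
  map_smul' c f := by
    funext n
    by_cases h : 0 < n.val <;> simp [h]

/-- The action of `E` on `V_α`:
`E v_n = [n]·(q⁻ⁿ e^{2iπα/N} - qⁿ e^{-2iπα/N})/(q - q⁻¹) · v_{n-1}` and `E v_0 = 0`. -/
noncomputable def Eop (N k : ℕ) (α : ℂ) : (Fin N → ℂ) →ₗ[ℂ] (Fin N → ℂ) where
  toFun f := fun n =>
    if h : n.val + 1 < N then Ecoef N k α (n.val + 1) * f ⟨n.val + 1, h⟩ else 0
  map_add' f g := by
    funext n
    by_cases h : n.val + 1 < N <;> simp [h, mul_add]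
  map_smul' c f := by
    funext n
    by_cases h : n.val + 1 < N <;> simp [h] <;> ring

/-- The action of `K = q^H` on `V_α`: `K v_n = q^{α/k + N - 1 - 2n} v_n`. -/
noncomputable def Kop (N k : ℕ) (α : ℂ) : (Fin N → ℂ) →ₗ[ℂ] (Fin N → ℂ) where
  toFun f := fun n => qpow N k (α / k + (N - 1 : ℂ) - 2 * n.val) * f n
  map_add' _ _ := by funext n; simp [mul_add]
  map_smul' _ _ := by funext n; simp [smul_eq_mul]; ring

/-- The action of `K⁻¹` on `V_α`. -/
noncomputable def Kinv (N k : ℕ) (α : ℂ) : (Fin N → ℂ) →ₗ[ℂ] (Fin N → ℂ) where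
  toFun f := fun n => qpow N k (-(α / k + (N - 1 : ℂ) - 2 * n.val)) * f n
  map_add' _ _ := by funext n; simp [mul_add]
  map_smul' _ _ := by funext n; simp [smul_eq_mul]; ring

/-!
The weight operator `H` is diagonal with pairwise distinct eigenvalues, so a submodule stable
under `H` contains the coordinate vectors `v i • e_i` of each of its elements; a nonzero one
therefore contains some basis vector `e_m`. The hypothesis on `α` makes every coefficient of `E`
nonzero, so `E` walks `e_m` down to `e_0`, and `F` walks `e_0` up through all of `e_0, …, e_{N-1}`.
-/

section Diagonal

variable {ι K : Type*} [DecidableEq ι] [Field K] {d : ι → K}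
  {p : Submodule K (ι → K)}

theorem Submodule.prod_sub_mul_mem_of_diag_invariant (hp : ∀ v ∈ p, (fun i => d i * v i) ∈ p)
    (s : Finset ι) {v : ι → K} (hv : v ∈ p) : (fun i => (∏ j ∈ s, (d i - d j)) * v i) ∈ p := by
  induction s using Finset.induction_on with
  | empty => simpa using hv
  | insert j s hj ih =>
    have hw := p.sub_mem (hp _ ih) (p.smul_mem (d j) ih)
    convert hw using 1
    funext i
    simp only [Finset.prod_insert hj, Pi.sub_apply, Pi.smul_apply, smul_eq_mul]
    ring

theorem Submodule.single_mem_of_diag_invariant [Fintype ι] (hd : Function.Injective d)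
    (hp : ∀ v ∈ p, (fun i => d i * v i) ∈ p) {v : ι → K} (hv : v ∈ p) (i : ι) :
    Pi.single i (v i) ∈ p := by
  set c := ∏ j ∈ Finset.univ.erase i, (d i - d j)
  have hc : c ≠ 0 := Finset.prod_ne_zero_iff.2 fun j hj =>
    sub_ne_zero.2 (hd.ne (Finset.ne_of_mem_erase hj).symm)
  convert p.smul_mem c⁻¹ (p.prod_sub_mul_mem_of_diag_invariant hp (Finset.univ.erase i) hv)
    using 1
  funext l
  rcases eq_or_ne l i with rfl | hl
  · simp [c, hc]
  · rw [Pi.single_eq_of_ne hl, Pi.smul_apply, smul_eq_mul,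
      Finset.prod_eq_zero (Finset.mem_erase.2 ⟨hl, Finset.mem_univ l⟩) (sub_self _)]
    simp

end Diagonal

theorem Submodule.single_one_mem_of_single_mem {ι K : Type*} [DecidableEq ι] [Field K]
    {p : Submodule K (ι → K)} {i : ι} {c : K} (hc : c ≠ 0) (h : Pi.single i c ∈ p) :
    Pi.single i 1 ∈ p := by
  simpa [← Pi.single_smul', hc] using p.smul_mem c⁻¹ h

theorem isPrimitiveRoot_qval {N k : ℕ} (hN : 0 < N) (hk : k.Coprime N) :
    IsPrimitiveRoot (qval N k) N := by
  simpa only [qval, mul_div_assoc] using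
    Complex.isPrimitiveRoot_exp_of_coprime k N hN.ne' hk

theorem IsPrimitiveRoot.pow_sub_inv_pow_ne_zero {K : Type*} [Field K] {ζ : K} {N n : ℕ}
    (hζ : IsPrimitiveRoot ζ N) (hN : Odd N) (hn : 0 < n) (hnN : n < N) :
    ζ ^ n - ζ⁻¹ ^ n ≠ 0 := by
  have hζ0 : ζ ≠ 0 := hζ.ne_zero (by omega)
  intro h
  have h2n : ζ ^ (2 * n) = 1 := by
    rw [inv_pow, sub_eq_zero] at h
    rw [two_mul, pow_add]
    nth_rw 1 [h]
    exact inv_mul_cancel₀ (pow_ne_zero _ hζ0)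
  have hdvd : N ∣ n :=
    (Nat.coprime_two_right.2 hN).dvd_of_dvd_mul_left (hζ.pow_eq_one_iff_dvd _ |>.1 h2n)
  exact absurd (Nat.le_of_dvd hn hdvd) (by omega)

theorem inv_pow_mul_sub_pow_mul_inv_ne_zero {K : Type*} [Field K] {q a : K} (hq : q ≠ 0)
    (ha : a ≠ 0) {n : ℕ} (h : a ^ 2 ≠ q ^ (2 * n)) : q⁻¹ ^ n * a - q ^ n * a⁻¹ ≠ 0 := by
  refine fun h0 => h ?_
  have : a ^ 2 - q ^ (2 * n) = q ^ n * a * (q⁻¹ ^ n * a - q ^ n * a⁻¹) := by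
    rw [inv_pow]
    field_simp
    ring
  rwa [h0, mul_zero, sub_eq_zero] at this

theorem Ecoef_ne_zero {N k n : ℕ} {α : ℂ} (hq : IsPrimitiveRoot (qval N k) N) (hN : Odd N)
    (hn : 0 < n) (hnN : n < N)
    (hα : Complex.exp (4 * Real.pi * Complex.I * α / N) ≠ qval N k ^ (2 * n)) :
    Ecoef N k α n ≠ 0 := by
  have hq1 : qval N k - (qval N k)⁻¹ ≠ 0 := by
    simpa using hq.pow_sub_inv_pow_ne_zero hN one_pos (by omega)
  have hexp : Complex.exp (-(2 * Real.pi * Complex.I * α) / N) =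
      (Complex.exp (2 * Real.pi * Complex.I * α / N))⁻¹ := by
    rw [← Complex.exp_neg, neg_div]
  have hsq : Complex.exp (2 * Real.pi * Complex.I * α / N) ^ 2 =
      Complex.exp (4 * Real.pi * Complex.I * α / N) := by
    rw [← Complex.exp_nat_mul]
    ring_nf
  rw [Ecoef, hexp]
  refine div_ne_zero (mul_ne_zero (div_ne_zero ?_ hq1) ?_) hq1
  · exact hq.pow_sub_inv_pow_ne_zero hN hn hnN
  · exact inv_pow_mul_sub_pow_mul_inv_ne_zero (Complex.exp_ne_zero _) (Complex.exp_ne_zero _)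
      (hsq ▸ hα)

section Ladder

variable {N k : ℕ} {α : ℂ}

theorem Eop_single_succ {n : ℕ} (hn : n + 1 < N) :
    Eop N k α (Pi.single ⟨n + 1, hn⟩ 1) = Pi.single ⟨n, by omega⟩ (Ecoef N k α (n + 1)) := by
  funext ⟨i, hi⟩
  simp only [Eop, LinearMap.coe_mk, AddHom.coe_mk, Pi.single_apply, Fin.mk.injEq]
  by_cases hin : i = n
  · subst hin
    simp [hn]
  · simp [hin]

theorem Fop_single {n : ℕ} (hn : n + 1 < N) :
    Fop N (Pi.single ⟨n, by omega⟩ 1) = Pi.single ⟨n + 1, hn⟩ 1 := by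
  funext ⟨i, hi⟩
  simp only [Fop, LinearMap.coe_mk, AddHom.coe_mk, Pi.single_apply, Fin.mk.injEq]
  by_cases hin : i = n + 1
  · subst hin
    simp
  · split_ifs <;> first | rfl | omega

variable {p : Submodule ℂ (Fin N → ℂ)}

theorem single_zero_mem_of_Eop_invariant (hE : ∀ v ∈ p, Eop N k α v ∈ p)
    (hc : ∀ n, 0 < n → n < N → Ecoef N k α n ≠ 0) :
    ∀ (m : ℕ) (hm : m < N), Pi.single ⟨m, hm⟩ 1 ∈ p → Pi.single ⟨0, by omega⟩ 1 ∈ p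
  | 0, _, h => h
  | m + 1, hm, h => single_zero_mem_of_Eop_invariant hE hc m (by omega) <|
      p.single_one_mem_of_single_mem (hc (m + 1) (by omega) hm)
        (Eop_single_succ (k := k) (α := α) hm ▸ hE _ h)

theorem single_mem_of_Fop_invariant (hF : ∀ v ∈ p, Fop N v ∈ p) (hN : 0 < N)
    (h0 : Pi.single ⟨0, hN⟩ 1 ∈ p) : ∀ (m : ℕ) (hm : m < N), Pi.single ⟨m, hm⟩ 1 ∈ p
  | 0, _ => h0
  | m + 1, hm => Fop_single hm ▸ hF _ (single_mem_of_Fop_invariant hF hN h0 m (by omega))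

end Ladder

theorem Hop_eigenvalue_injective (N k : ℕ) (α : ℂ) :
    Function.Injective fun i : Fin N => α / k + (N - 1 : ℂ) - 2 * i.val := by
  intro i j h
  have : (i.val : ℂ) = j.val := by linear_combination -h / 2
  exact Fin.ext (by exact_mod_cast this)

theorem Valpha_simple_general (N k' : ℕ) (hN : Odd N)
    (hcop : Nat.Coprime k' N) (k : ℕ) (hk : k = 2 * k') (α : ℂ)
    (hα : ∀ j : ℕ, 1 ≤ j → j ≤ N - 1 →
      Complex.exp (4 * Real.pi * Complex.I * α / N) ≠ qval N k ^ (2 * j)) :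
    ∀ p : Submodule ℂ (Fin N → ℂ), p ≠ ⊥ →
      (∀ v ∈ p, Eop N k α v ∈ p) → (∀ v ∈ p, Fop N v ∈ p) →
      (∀ v ∈ p, Hop N k α v ∈ p) → (∀ v ∈ p, Kop N k α v ∈ p) →
      p = ⊤ := by
  intro p hbot hE hF hH _
  have hq : IsPrimitiveRoot (qval N k) N :=
    isPrimitiveRoot_qval hN.pos (hk ▸ Nat.Coprime.mul_left (Nat.coprime_two_left.2 hN) hcop)
  have hc (n : ℕ) (hn : 0 < n) (hnN : n < N) : Ecoef N k α n ≠ 0 :=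
    Ecoef_ne_zero hq hN hn hnN (hα n hn (by omega))
  obtain ⟨v, hv, hv0⟩ := (Submodule.ne_bot_iff p).1 hbot
  obtain ⟨⟨m, hm⟩, hvm⟩ := Function.ne_iff.1 hv0
  have hsingle : Pi.single ⟨m, hm⟩ 1 ∈ p := p.single_one_mem_of_single_mem hvm <|
    p.single_mem_of_diag_invariant (Hop_eigenvalue_injective N k α) hH hv _
  have hall := single_mem_of_Fop_invariant hF hN.pos
    (single_zero_mem_of_Eop_invariant hE hc m hm hsingle)
  refine top_unique <| (Pi.basisFun ℂ (Fin N)).span_eq.ge.trans <|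
    Submodule.span_le.2 <| Set.range_subset_iff.2 fun i => ?_
  simpa using hall i.val i.isLt

/-- For `q = exp(2iπk/N)` a primitive `N`-th root of unity (`N` odd `≥ 3`, `k = 2k'`
with `k'` coprime to `N`), if `α ∈ ℂ` satisfies `e^{4iπα/N} ≠ q^{2j}` for all
`j = 1, …, N-1`, then the module `V_α` is simple: every nonzero subspace of `ℂ^N`
invariant under `E`, `F`, `H` and `K` is the whole space. -/
theorem Valpha_simple (N k' : ℕ) (hN : Odd N) (hN3 : 3 ≤ N)
    (hcop : Nat.Coprime k' N) (k : ℕ) (hk : k = 2 * k') (α : ℂ)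
    (hα : ∀ j : ℕ, 1 ≤ j → j ≤ N - 1 →
      Complex.exp (4 * Real.pi * Complex.I * α / N) ≠ qval N k ^ (2 * j)) :
    ∀ p : Submodule ℂ (Fin N → ℂ), p ≠ ⊥ →
      (∀ v ∈ p, Eop N k α v ∈ p) → (∀ v ∈ p, Fop N v ∈ p) →
      (∀ v ∈ p, Hop N k α v ∈ p) → (∀ v ∈ p, Kop N k α v ∈ p) →
      p = ⊤ :=
  Valpha_simple_general N k' hN hcop k hk α hα
end
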